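/- The unique positive root of F_1(β) = β⁶ - 4β⁵ + 4β⁴ - 3β² is β = 1 + √(1 + √3). -/
import Mathlib


noncomputable def F1 (β : ℝ) : ℝ := β^6 - 4*β^5 + 4*β^4 - 3*β^2

theorem stmt_6 :
    (0 < 1 + Real.sqrt (1 + Real.sqrt 3) ∧ F1 (1 + Real.sqrt (1 + Real.sqrt 3)) = 0) ∧
    ∀ β : ℝ, 0 < β → F1 β = 0 → β = 1 + Real.sqrt (1 + Real.sqrt 3) := by
  have hs : Real.sqrt 3 ^ 2 = 3 := Real.sq_sqrt (by norm_num)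
  have hs0 : (0:ℝ) ≤ Real.sqrt 3 := Real.sqrt_nonneg 3
  have hs1 : 1 < Real.sqrt 3 := by nlinarith
  set t := Real.sqrt (1 + Real.sqrt 3) with htdef
  have ht : t ^ 2 = 1 + Real.sqrt 3 := Real.sq_sqrt (by linarith)
  have ht0 : (0:ℝ) ≤ t := Real.sqrt_nonneg _
  have ht1 : 1 < t := by nlinarith
  refine ⟨⟨by linarith, ?_⟩, ?_⟩
  · unfold F1
    linear_combination (1+t)^2*(t^2-1+Real.sqrt 3)*ht + (1+t)^2*hs
  · intro β hβ hF
    unfold F1 at hF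
    have h0 : β ^ 2 * ((β ^ 2 - 2 * β) ^ 2 - 3) = 0 := by linear_combination hF
    have hβ2 : β ^ 2 ≠ 0 := pow_ne_zero 2 (ne_of_gt hβ)
    have h3 : (β ^ 2 - 2 * β) ^ 2 - 3 = 0 := by
      rcases mul_eq_zero.mp h0 with h | h
      · exact absurd h hβ2
      · exact h
    have hfac : (β ^ 2 - 2 * β - Real.sqrt 3) * (β ^ 2 - 2 * β + Real.sqrt 3) = 0 := by
      linear_combination h3 - hs
    rcases mul_eq_zero.mp hfac with h | h
    · -- β² - 2β = √3, so (β-1)² = 1+√3 = t²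
      have hf2 : (β - 1 - t) * (β - 1 + t) = 0 := by
        linear_combination h - ht
      rcases mul_eq_zero.mp hf2 with h2 | h2
      · linarith
      · -- β = 1 - t < 0, contradiction
        exfalso; linarith
    · -- β² - 2β = -√3, so (β-1)² = 1-√3 < 0, contradiction
      exfalso
      nlinarith [sq_nonneg (β - 1)]
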